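/- Let λ₀ = 1, λⱼ = 2^{-2^j} for j ≥ 1, and for a finitely supported sequence α = (αⱼ) with αⱼ ∈ {0,1} set x_α = Σ_{j≥1} αⱼ(1-λⱼ)λ₀···λ_{j-1}. If x_α < x_β then there exists j ≥ 1 with βⱼ - αⱼ = 1 and αₘ = βₘ for all m < j. -/

import Mathlib

/-!
Writing `Pⱼ = λ₀⋯λ_{j-1}`, the `j`-th digit carries weight `(1 - λⱼ)Pⱼ = Pⱼ - P_{j+1}`, so by
telescoping all digits after `j` together weigh at most `P_{j+1} = λⱼPⱼ`, which is less than
`(1 - λⱼ)Pⱼ` because `λⱼ < 1/2`. Hence `x_α` is lexicographic in `α`: at the first index where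
`α` and `β` differ, the sequence with digit `1` has the larger point.
-/

open scoped Classical

/-- `λ₀ = 1`, `λⱼ = 2^{-2^j}` for `j ≥ 1`. -/
noncomputable def lamSeq (j : ℕ) : ℝ := if j = 0 then 1 else ((2 : ℝ) ^ (2 ^ j))⁻¹

/-- `λ₀ λ₁ ⋯ λ_{m-1}`. -/
noncomputable def lamProd (m : ℕ) : ℝ := ∏ i ∈ Finset.range m, lamSeq i

/-- `x_α = Σ_{j ≥ 1} αⱼ (1-λⱼ) λ₀⋯λ_{j-1}`. -/
noncomputable def xPoint (α : ℕ → ℕ) : ℝ :=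
  ∑' j : ℕ, if 1 ≤ j then (α j : ℝ) * (1 - lamSeq j) * lamProd j else 0

/-- A finitely supported `0`-`1` sequence (indexed by `j ≥ 1`). -/
def BinSeq (α : ℕ → ℕ) : Prop := (∀ j, α j ≤ 1) ∧ ∃ N, ∀ j, N ≤ j → α j = 0

noncomputable def xTerm (γ : ℕ → ℕ) (m : ℕ) : ℝ :=
  if 1 ≤ m then (γ m : ℝ) * (1 - lamSeq m) * lamProd m else 0

lemma lamSeq_pos (j : ℕ) : 0 < lamSeq j := by
  unfold lamSeq; split <;> positivity

lemma lamSeq_le_one (j : ℕ) : lamSeq j ≤ 1 := by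
  unfold lamSeq
  split
  · exact le_rfl
  · exact inv_le_one_of_one_le₀ (one_le_pow₀ one_le_two)

lemma lamSeq_lt_half {j : ℕ} (hj : 1 ≤ j) : lamSeq j < 1 / 2 := by
  rw [lamSeq, if_neg (by omega), one_div]
  have h2j : 1 < 2 ^ j := Nat.one_lt_two_pow (by omega)
  exact inv_strictAnti₀ two_pos (by simpa using pow_lt_pow_right₀ one_lt_two h2j)

lemma lamProd_pos (m : ℕ) : 0 < lamProd m :=
  Finset.prod_pos fun i _ => lamSeq_pos i

lemma lamProd_succ (m : ℕ) : lamProd (m + 1) = lamProd m * lamSeq m :=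
  Finset.prod_range_succ _ _

lemma lamProd_succ_lt {j : ℕ} (hj : 1 ≤ j) : lamProd (j + 1) < (1 - lamSeq j) * lamProd j := by
  rw [lamProd_succ]
  nlinarith [lamSeq_lt_half hj, lamProd_pos j]

lemma xTerm_nonneg (γ : ℕ → ℕ) (m : ℕ) : 0 ≤ xTerm γ m := by
  unfold xTerm
  split
  · have := lamSeq_le_one m
    have := lamProd_pos m
    positivity
  · exact le_rfl

lemma xTerm_le (γ : ℕ → ℕ) (hγ : ∀ m, γ m ≤ 1) (m : ℕ) :
    xTerm γ m ≤ lamProd m - lamProd (m + 1) := by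
  have hweight : 0 ≤ (1 - lamSeq m) * lamProd m :=
    mul_nonneg (sub_nonneg.2 (lamSeq_le_one m)) (lamProd_pos m).le
  have hdigit : (γ m : ℝ) ≤ 1 := by exact_mod_cast hγ m
  rw [lamProd_succ, xTerm]
  split
  · nlinarith
  · linarith

lemma sum_Ico_xTerm_le (γ : ℕ → ℕ) (hγ : ∀ m, γ m ≤ 1) {a b : ℕ} (hab : a ≤ b) :
    ∑ m ∈ Finset.Ico a b, xTerm γ m ≤ lamProd a :=
  calc ∑ m ∈ Finset.Ico a b, xTerm γ m
      ≤ ∑ m ∈ Finset.Ico a b, (lamProd m - lamProd (m + 1)) :=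
        Finset.sum_le_sum fun m _ => xTerm_le γ hγ m
    _ = lamProd a - lamProd b := by
        rw [← neg_sub, ← Finset.sum_Ico_sub (f := lamProd) hab, ← Finset.sum_neg_distrib]
        simp only [neg_sub]
    _ ≤ lamProd a := sub_le_self _ (lamProd_pos b).le

lemma xPoint_eq_sum_range (γ : ℕ → ℕ) {N : ℕ} (hN : ∀ m, N ≤ m → γ m = 0) :
    xPoint γ = ∑ m ∈ Finset.range N, xTerm γ m :=
  tsum_eq_sum fun m hm => by simp [hN m (by simpa using hm)]

lemma xTerm_congr {α β : ℕ → ℕ} {m : ℕ} (h : 1 ≤ m → α m = β m) : xTerm α m = xTerm β m := by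
  unfold xTerm
  split_ifs with hm
  · rw [h hm]
  · rfl

lemma xPoint_lt_of_first_difference {α β : ℕ → ℕ} {j N : ℕ} (hα : ∀ m, α m ≤ 1)
    (hαN : ∀ m, N ≤ m → α m = 0) (hβN : ∀ m, N ≤ m → β m = 0) (hjN : j < N) (hj : 1 ≤ j)
    (hagree : ∀ m, 1 ≤ m → m < j → α m = β m) (hαj : α j = 0) (hβj : β j = 1) :
    xPoint α < xPoint β := by
  have hsplit : ∀ γ : ℕ → ℕ, (∀ m, N ≤ m → γ m = 0) → xPoint γ =
      ∑ m ∈ Finset.range j, xTerm γ m + xTerm γ j + ∑ m ∈ Finset.Ico (j + 1) N, xTerm γ m :=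
    fun γ hγN => by
      rw [xPoint_eq_sum_range γ hγN, ← Finset.sum_range_add_sum_Ico _ hjN, Finset.sum_range_succ]
  have hhead : ∑ m ∈ Finset.range j, xTerm α m = ∑ m ∈ Finset.range j, xTerm β m :=
    Finset.sum_congr rfl fun m hm => xTerm_congr fun h1 => hagree m h1 (Finset.mem_range.1 hm)
  have hαj' : xTerm α j = 0 := by simp [xTerm, hαj]
  have hβj' : xTerm β j = (1 - lamSeq j) * lamProd j := by simp [xTerm, hj, hβj]
  have hαtail := sum_Ico_xTerm_le α hα hjN
  have hβtail : 0 ≤ ∑ m ∈ Finset.Ico (j + 1) N, xTerm β m :=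
    Finset.sum_nonneg fun m _ => xTerm_nonneg β m
  rw [hsplit α hαN, hsplit β hβN, hhead, hαj', hβj']
  linarith [lamProd_succ_lt hj]

/-- If `x_α < x_β` then there is `j ≥ 1` with `βⱼ - αⱼ = 1` and `αₘ = βₘ` for `m < j`. -/
theorem first_difference (α β : ℕ → ℕ) (hα : BinSeq α) (hβ : BinSeq β)
    (h : xPoint α < xPoint β) :
    ∃ j : ℕ, 1 ≤ j ∧ β j = 1 ∧ α j = 0 ∧ ∀ m, 1 ≤ m → m < j → α m = β m := by
  obtain ⟨hα1, Nα, hαN⟩ := hα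
  obtain ⟨hβ1, Nβ, hβN⟩ := hβ
  have hdiff : ∃ j, 1 ≤ j ∧ α j ≠ β j := by
    by_contra! hsame
    exact h.ne (tsum_congr fun m => xTerm_congr (hsame m))
  obtain ⟨hj, hne⟩ := Nat.find_spec hdiff
  set j := Nat.find hdiff
  have hagree : ∀ m, 1 ≤ m → m < j → α m = β m := fun m h1 hmj =>
    by_contra fun hmne => Nat.find_min hdiff hmj ⟨h1, hmne⟩
  set N := max (j + 1) (max Nα Nβ)
  have hαN' : ∀ m, N ≤ m → α m = 0 := fun m hm => hαN m (by omega)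
  have hβN' : ∀ m, N ≤ m → β m = 0 := fun m hm => hβN m (by omega)
  rcases (by have := hα1 j; have := hβ1 j; omega : (α j = 0 ∧ β j = 1) ∨ (α j = 1 ∧ β j = 0))
    with ⟨hαj, hβj⟩ | ⟨hαj, hβj⟩
  · exact ⟨j, hj, hβj, hαj, hagree⟩
  · exact absurd h (xPoint_lt_of_first_difference hβ1 hβN' hαN' (by omega) hj
      (fun m h1 hmj => (hagree m h1 hmj).symm) hβj hαj).not_gt
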